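/- For every complex number q with |q| < 1, ∑_{n≥1} q^n (−q^n; q)_∞ (−q^3; q^3)_{n−1} / [ (q^{n+1}; q)_∞ (q^3; q^3)_n ] = −(1/2)·( (−q^3; q^3)_∞/(q^3; q^3)_∞ − (−q; q)_∞/(q; q)_∞ ). -/

import Mathlib

/-!
Put `r n = (-q^{n+1}; q)_∞ (-q³; q³)_n / ((q^{n+1}; q)_∞ (q³; q³)_n)`. By the identity
`(1 + x)/(1 - x) - (1 + x³)/(1 - x³) = 2x(1 + x)/(1 - x³)` at `x = q^{n+1}`, the `n`-th summand
is `(r n - r (n + 1)) / 2`, so the series telescopes to `(r 0 - lim r) / 2`, where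
`r 0 = (-q; q)_∞ / (q; q)_∞` and `lim r = (-q³; q³)_∞ / (q³; q³)_∞` because `(a q^n; q)_∞ → 1`.
The factor `q^{n+1}` makes the series absolutely convergent.
-/

/-- Finite q-Pochhammer symbol `(a; q)_n = ∏_{j=0}^{n-1} (1 - a q^j)`. -/
noncomputable def qPoch (q a : ℂ) (n : ℕ) : ℂ := ∏ j ∈ Finset.range n, (1 - a * q ^ j)

/-- Infinite q-Pochhammer symbol `(a; q)_∞ = ∏_{j=0}^{∞} (1 - a q^j)`. -/
noncomputable def qPochInf (q a : ℂ) : ℂ := ∏' j : ℕ, (1 - a * q ^ j)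

open Filter Topology

lemma hasSum_of_eq_sub_succ {G : Type*} [AddCommGroup G] [TopologicalSpace G]
    [IsTopologicalAddGroup G] [T2Space G] {f b : ℕ → G} {L : G} (hf : Summable f)
    (hfb : ∀ n, f n = b n - b (n + 1)) (hb : Tendsto b atTop (𝓝 L)) : HasSum f (b 0 - L) := by
  have hpartial : Tendsto (fun N => ∑ n ∈ Finset.range N, f n) atTop (𝓝 (b 0 - L)) := by
    simpa only [hfb, Finset.sum_range_sub'] using tendsto_const_nhds.sub hb
  exact tendsto_nhds_unique hf.hasSum.tendsto_sum_nat hpartial ▸ hf.hasSum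

lemma summable_pow_mul_of_tendsto {𝕜 : Type*} [NormedField 𝕜] [CompleteSpace 𝕜] {q L : 𝕜}
    {u : ℕ → 𝕜} (hq : ‖q‖ < 1) (hu : Tendsto u atTop (𝓝 L)) : Summable fun n => q ^ n * u n := by
  have hO : (fun n => q ^ n * u n) =O[atTop] fun n => q ^ n :=
    ((Asymptotics.isBigO_refl (fun n => q ^ n) atTop).mul (hu.isBigO_one 𝕜)).congr_right
      fun n => mul_one _
  exact summable_of_isBigO_nat (summable_geometric_of_lt_one (norm_nonneg q) hq)
    (by simpa only [norm_pow] using hO.norm_right)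

section QPochhammer

variable {q : ℂ}

lemma qPoch_succ (a : ℂ) (n : ℕ) : qPoch q a (n + 1) = qPoch q a n * (1 - a * q ^ n) :=
  Finset.prod_range_succ _ n

lemma qPoch_ne_zero {a : ℂ} (ha : ∀ j, 1 - a * q ^ j ≠ 0) (n : ℕ) : qPoch q a n ≠ 0 :=
  Finset.prod_ne_zero_iff.2 fun j _ => ha j

lemma norm_pow_lt_one (hq : ‖q‖ < 1) {k : ℕ} (hk : k ≠ 0) : ‖q ^ k‖ < 1 := by
  rwa [norm_pow, pow_lt_one_iff_of_nonneg (norm_nonneg q) hk]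

lemma one_sub_mul_pow_ne_zero {a : ℂ} (hq : ‖q‖ ≤ 1) (ha : ‖a‖ < 1) (j : ℕ) :
    1 - a * q ^ j ≠ 0 := by
  refine sub_ne_zero.2 fun h => (ne_of_lt ?_) (congrArg norm h).symm
  calc ‖a * q ^ j‖ = ‖a‖ * ‖q‖ ^ j := by rw [norm_mul, norm_pow]
    _ ≤ ‖a‖ := mul_le_of_le_one_right (norm_nonneg a) (pow_le_one₀ (norm_nonneg q) hq)
    _ < ‖(1 : ℂ)‖ := by rwa [norm_one]

lemma summable_norm_mul_pow (hq : ‖q‖ < 1) (a : ℂ) : Summable fun j : ℕ => ‖a * q ^ j‖ := by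
  simpa only [norm_mul, norm_pow] using (summable_geometric_of_lt_one (norm_nonneg q) hq).mul_left ‖a‖

lemma multipliable_one_sub_mul_pow (hq : ‖q‖ < 1) (a : ℂ) :
    Multipliable fun j : ℕ => 1 - a * q ^ j := by
  simpa [sub_eq_add_neg] using multipliable_one_add_of_summable (f := fun j => -(a * q ^ j))
    (by simpa only [norm_neg] using summable_norm_mul_pow hq a)

lemma qPochInf_ne_zero {a : ℂ} (hq : ‖q‖ < 1) (ha : ∀ j, 1 - a * q ^ j ≠ 0) :
    qPochInf q a ≠ 0 := by
  have h := tprod_one_add_ne_zero_of_summable (f := fun j => -(a * q ^ j))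
    (fun j => by rw [← sub_eq_add_neg]; exact ha j)
    (by simpa only [norm_neg] using summable_norm_mul_pow hq a)
  simpa only [qPochInf, ← sub_eq_add_neg] using h

lemma tendsto_qPoch (hq : ‖q‖ < 1) (a : ℂ) :
    Tendsto (qPoch q a) atTop (𝓝 (qPochInf q a)) :=
  (multipliable_one_sub_mul_pow hq a).hasProd.tendsto_prod_nat

lemma qPoch_mul_qPochInf_mul_pow (hq : ‖q‖ < 1) (a : ℂ) (n : ℕ) :
    qPoch q a n * qPochInf q (a * q ^ n) = qPochInf q a := by
  have hshift : (fun j => 1 - a * q ^ (j + n)) = fun j => 1 - a * q ^ n * q ^ j := by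
    ext j; ring
  have h := Multipliable.prod_mul_tprod_nat_mul' (f := fun j => 1 - a * q ^ j) (k := n)
    (hshift ▸ multipliable_one_sub_mul_pow hq (a * q ^ n))
  rwa [hshift] at h

lemma qPochInf_eq_one_sub_mul (hq : ‖q‖ < 1) (a : ℂ) :
    qPochInf q a = (1 - a) * qPochInf q (a * q) := by
  simpa [qPoch] using (qPoch_mul_qPochInf_mul_pow hq a 1).symm

lemma tendsto_qPochInf_mul_pow {a : ℂ} (hq : ‖q‖ < 1) (ha : ∀ j, 1 - a * q ^ j ≠ 0) :
    Tendsto (fun n : ℕ => qPochInf q (a * q ^ n)) atTop (𝓝 1) := by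
  have hne := qPochInf_ne_zero hq ha
  have h := (tendsto_const_nhds (x := qPochInf q a)).div (tendsto_qPoch hq a) hne
  rw [div_self hne] at h
  refine h.congr fun n => ?_
  rw [Pi.div_apply, div_eq_iff (qPoch_ne_zero ha n), mul_comm, qPoch_mul_qPochInf_mul_pow hq]

lemma tendsto_qPochInf_pow_add (hq : ‖q‖ < 1) {k : ℕ} (hk : k ≠ 0) :
    Tendsto (fun n : ℕ => qPochInf q (q ^ (n + k))) atTop (𝓝 1) :=
  (tendsto_qPochInf_mul_pow hq (one_sub_mul_pow_ne_zero hq.le (norm_pow_lt_one hq hk))).congr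
    fun n => by rw [pow_add, mul_comm]

lemma tendsto_qPochInf_neg_pow_add (hq : ‖q‖ < 1) {k : ℕ} (hk : k ≠ 0) :
    Tendsto (fun n : ℕ => qPochInf q (-q ^ (n + k))) atTop (𝓝 1) :=
  (tendsto_qPochInf_mul_pow hq (a := -q ^ k)
    (one_sub_mul_pow_ne_zero hq.le ((norm_neg (q ^ k)).symm ▸ norm_pow_lt_one hq hk))).congr
    fun n => by rw [pow_add, neg_mul, mul_comm]

end QPochhammer

section TelescopingRatio

variable {q : ℂ}

noncomputable def telescopingRatio (q : ℂ) (n : ℕ) : ℂ :=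
  qPochInf q (-q ^ (n + 1)) * qPoch (q ^ 3) (-q ^ 3) n /
    (qPochInf q (q ^ (n + 1)) * qPoch (q ^ 3) (q ^ 3) n)

lemma telescopingRatio_zero : telescopingRatio q 0 = qPochInf q (-q) / qPochInf q q := by
  simp [telescopingRatio, qPoch]

lemma summand_eq_half_sub_telescopingRatio (hq : ‖q‖ < 1) (n : ℕ) :
    q ^ (n + 1) * qPochInf q (-q ^ (n + 1)) * qPoch (q ^ 3) (-q ^ 3) n /
        (qPochInf q (q ^ (n + 2)) * qPoch (q ^ 3) (q ^ 3) (n + 1)) =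
      1 / 2 * telescopingRatio q n - 1 / 2 * telescopingRatio q (n + 1) := by
  have hq3 : ‖q ^ 3‖ < 1 := norm_pow_lt_one hq (by norm_num)
  have hA : qPochInf q (-q ^ (n + 1)) = (1 + q ^ (n + 1)) * qPochInf q (-q ^ (n + 2)) := by
    rw [qPochInf_eq_one_sub_mul hq, neg_mul, ← pow_succ, sub_neg_eq_add]
  have hB : qPochInf q (q ^ (n + 1)) = (1 - q ^ (n + 1)) * qPochInf q (q ^ (n + 2)) := by
    rw [qPochInf_eq_one_sub_mul hq, ← pow_succ]
  have hB0 : qPochInf q (q ^ (n + 2)) ≠ 0 :=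
    qPochInf_ne_zero hq (one_sub_mul_pow_ne_zero hq.le (norm_pow_lt_one hq (by omega)))
  have hQ0 : qPoch (q ^ 3) (q ^ 3) n ≠ 0 := qPoch_ne_zero (one_sub_mul_pow_ne_zero hq3.le hq3) n
  have hx1 : 1 - q ^ (n + 1) ≠ 0 := by
    simpa using one_sub_mul_pow_ne_zero hq.le (norm_pow_lt_one hq n.succ_ne_zero) 0
  have hx3 : 1 - q ^ 3 * (q ^ 3) ^ n ≠ 0 := one_sub_mul_pow_ne_zero hq3.le hq3 n
  simp only [telescopingRatio, hA, hB, qPoch_succ]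
  field_simp
  ring

lemma tendsto_telescopingRatio (hq : ‖q‖ < 1) :
    Tendsto (telescopingRatio q) atTop
      (𝓝 (qPochInf (q ^ 3) (-q ^ 3) / qPochInf (q ^ 3) (q ^ 3))) := by
  have hq3 : ‖q ^ 3‖ < 1 := norm_pow_lt_one hq (by norm_num)
  have hQ : qPochInf (q ^ 3) (q ^ 3) ≠ 0 :=
    qPochInf_ne_zero hq3 (one_sub_mul_pow_ne_zero hq3.le hq3)
  have h := ((tendsto_qPochInf_neg_pow_add hq one_ne_zero).mul (tendsto_qPoch hq3 (-q ^ 3))).div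
    ((tendsto_qPochInf_pow_add hq one_ne_zero).mul (tendsto_qPoch hq3 _)) (by rwa [one_mul])
  rwa [one_mul, one_mul] at h

lemma summable_summand (hq : ‖q‖ < 1) :
    Summable fun n : ℕ => q ^ (n + 1) * qPochInf q (-q ^ (n + 1)) * qPoch (q ^ 3) (-q ^ 3) n /
      (qPochInf q (q ^ (n + 2)) * qPoch (q ^ 3) (q ^ 3) (n + 1)) := by
  have hq3 : ‖q ^ 3‖ < 1 := norm_pow_lt_one hq (by norm_num)
  have hQ : qPochInf (q ^ 3) (q ^ 3) ≠ 0 :=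
    qPochInf_ne_zero hq3 (one_sub_mul_pow_ne_zero hq3.le hq3)
  have hu := ((tendsto_qPochInf_neg_pow_add hq one_ne_zero).mul (tendsto_qPoch hq3 (-q ^ 3))).div
    ((tendsto_qPochInf_pow_add hq two_ne_zero).mul
      ((tendsto_qPoch hq3 (q ^ 3)).comp (tendsto_add_atTop_nat 1))) (by rwa [one_mul])
  refine ((summable_pow_mul_of_tendsto hq hu).mul_left q).congr fun n => ?_
  simp only [Pi.div_apply, Function.comp_apply]
  ring

end TelescopingRatio

theorem thmA2_d (q : ℂ) (hq : ‖q‖ < 1) :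
    ∑' n : ℕ, q ^ (n + 1) * qPochInf q (-q ^ (n + 1)) * qPoch (q ^ 3) (-q ^ 3) n /
        (qPochInf q (q ^ (n + 2)) * qPoch (q ^ 3) (q ^ 3) (n + 1))
      = -(1 / 2) * (qPochInf (q ^ 3) (-q ^ 3) / qPochInf (q ^ 3) (q ^ 3) -
          qPochInf q (-q) / qPochInf q q) := by
  have h := hasSum_of_eq_sub_succ (b := fun n => 1 / 2 * telescopingRatio q n)
    (summable_summand hq) (summand_eq_half_sub_telescopingRatio hq)
    ((tendsto_telescopingRatio hq).const_mul (1 / 2))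
  rw [h.tsum_eq, telescopingRatio_zero]
  ring
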